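/- Let n be even, let a_1, …, a_n be positive integers, and let W = Σ_i a_i. Define an instance of Seat Arrangement with agents P = {p_1, …, p_n} ∪ {c_1, c_2} and symmetric preferences f_{p_i}(c_j) = f_{c_j}(p_i) = a_i for all i and j ∈ {1,2}, with all other preferences 0; the seat graph is the disjoint union of two stars, each consisting of a center adjacent to n/2 leaves. Then an envy-free arrangement exists if and only if {1, …, n} can be partitioned into sets I_1, I_2 with |I_1| = |I_2| = n/2 and Σ_{i ∈ I_1} a_i = Σ_{i ∈ I_2} a_i = W/2. -/

import Mathlib

open scoped Classical

noncomputable section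

namespace SeatArrangement

variable {P V : Type*}

/-- The utility of agent `p` under arrangement `π`:
the sum, over the seat-graph neighbors `v` of `π p`, of `p`'s preference for the agent seated
at `v`. -/
def utility [Fintype V] (G : SimpleGraph V) (f : P → P → ℝ) (π : P ≃ V) (p : P) : ℝ :=
  ∑ v : V, if G.Adj (π p) v then f p (π.symm v) else 0

/-- The social welfare of an arrangement: the sum of the utilities of all agents. -/
def sw [Fintype P] [Fintype V] (G : SimpleGraph V) (f : P → P → ℝ) (π : P ≃ V) : ℝ :=
  ∑ p : P, utility G f π p

/-- The `(p,q)`-swap arrangement of `π`. -/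
def swapArr (π : P ≃ V) (p q : P) : P ≃ V := (Equiv.swap p q).trans π

/-- `{p, q}` is a blocking pair for `π`: both agents strictly improve by swapping seats. -/
def blocking [Fintype V] (G : SimpleGraph V) (f : P → P → ℝ) (π : P ≃ V) (p q : P) : Prop :=
  p ≠ q ∧ utility G f π p < utility G f (swapArr π p q) p
        ∧ utility G f π q < utility G f (swapArr π p q) q

/-- An arrangement is stable if it has no blocking pair. -/
def stable [Fintype V] (G : SimpleGraph V) (f : P → P → ℝ) (π : P ≃ V) : Prop :=
  ∀ p q : P, ¬ blocking G f π p q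

/-- An arrangement is envy-free if no agent would strictly improve by taking
another agent's seat (via a swap). -/
def envyFree [Fintype V] (G : SimpleGraph V) (f : P → P → ℝ) (π : P ≃ V) : Prop :=
  ∀ p q : P, p ≠ q → utility G f (swapArr π p q) p ≤ utility G f π p

/-- The least utility of an agent under `π` (for a finite nonempty set of agents, the
infimum of the range of utilities is the minimum utility). -/
def minUtil [Fintype V] (G : SimpleGraph V) (f : P → P → ℝ) (π : P ≃ V) : ℝ :=
  sInf (Set.range (utility G f π))

/-- A maximin arrangement maximizes the least utility of an agent. -/
def maximin [Fintype V] (G : SimpleGraph V) (f : P → P → ℝ) (πf : P ≃ V) : Prop :=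
  ∀ π : P ≃ V, minUtil G f π ≤ minUtil G f πf

/-- A maximum arrangement maximizes the social welfare. -/
def maximum [Fintype P] [Fintype V] (G : SimpleGraph V) (f : P → P → ℝ) (πm : P ≃ V) : Prop :=
  ∀ π : P ≃ V, sw G f π ≤ sw G f πm

end SeatArrangement

open SeatArrangement

/-- Seats for STATEMENT 18: two star centers (`Fin 2`) and, for each center `j : Fin 2`,
`n/2` leaves `(j, ·)`. -/
abbrev StarSeats (n : ℕ) := Fin 2 ⊕ (Fin 2 × Fin (n / 2))

/-- The seat graph for STATEMENT 18: the disjoint union of two stars, each consisting of a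
center adjacent to `n/2` leaves. -/
def twoStars (n : ℕ) : SimpleGraph (StarSeats n) where
  Adj x y :=
    match x, y with
    | .inl j, .inr l => j = l.1
    | .inr l, .inl j => j = l.1
    | _, _ => False
  symm := by
    constructor
    rintro (x | x) (y | y) h <;> simp_all
  loopless := by
    constructor
    rintro (x | x) h <;> simp_all

/-- Preferences for STATEMENT 18: symmetric preferences where element agent `p_i` and each
center agent `c_j` mutually have preference `a_i`; all other preferences are 0. -/
def prefs18 (n : ℕ) (a : Fin n → ℕ) : (Fin n ⊕ Fin 2) → (Fin n ⊕ Fin 2) → ℝ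
  | .inl i, .inr _ => a i
  | .inr _, .inl i => a i
  | _, _ => 0

/-! With the agents `c₀, c₁` on the two centres, each `c` collects the weight of the element
agents on its leaves, every element agent already gets its full value `aᵢ`, and the only possible
envy is between `c₀` and `c₁`; so such an arrangement is envy-free exactly when the two leaf sets
have equal weight.

Conversely, let the weights be positive and the arrangement envy-free. A `c` on a leaf, with an
element agent on another leaf of its star, would gain by moving to the centre of its star; so every
`c` is adjacent to all element agents of its star. If both `c` were in one star, an element agent
on a leaf of the other star would have utility `0` and would gain by moving to the centre of the
first. Hence each star holds one `c` and `n/2` element agents, each `c` collects the weight of its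
star, and `c₀, c₁` not envying each other means that the two weights agree.
-/

namespace SeatArrangement

variable {P V : Type*}

theorem swapArr_apply (π : P ≃ V) (p q r : P) : swapArr π p q r = π (Equiv.swap p q r) := rfl

variable [Fintype P] [Fintype V]

theorem utility_eq_sum_agents (G : SimpleGraph V) (f : P → P → ℝ) (π : P ≃ V) (p : P) :
    utility G f π p = ∑ r, if G.Adj (π p) (π r) then f p r else 0 := by
  rw [utility, ← π.sum_comp]
  simp

theorem sum_le_utility (G : SimpleGraph V) {f : P → P → ℝ} (hf : ∀ p q, 0 ≤ f p q)
    (π : P ≃ V) (p : P) {s : Finset P} (hs : ∀ r ∈ s, G.Adj (π p) (π r)) :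
    ∑ r ∈ s, f p r ≤ utility G f π p := by
  rw [utility_eq_sum_agents]
  calc ∑ r ∈ s, f p r = ∑ r ∈ s, if G.Adj (π p) (π r) then f p r else 0 :=
        Finset.sum_congr rfl fun r hr => (if_pos (hs r hr)).symm
    _ ≤ _ := Finset.sum_le_sum_of_subset_of_nonneg (Finset.subset_univ s)
        fun r _ _ => by split_ifs <;> simp [hf]

end SeatArrangement

section TwoStars

variable {n : ℕ}

def starOf : StarSeats n → Fin 2 := Sum.elim id Prod.fst

@[simp] theorem starOf_inl (j : Fin 2) : starOf (n := n) (.inl j) = j := rfl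

@[simp] theorem starOf_inr (l : Fin 2 × Fin (n / 2)) : starOf (.inr l) = l.1 := rfl

@[simp] theorem twoStars_adj_inl_inr (j : Fin 2) (l : Fin 2 × Fin (n / 2)) :
    (twoStars n).Adj (.inl j) (.inr l) ↔ j = l.1 := Iff.rfl

@[simp] theorem twoStars_adj_inr_inl (j : Fin 2) (l : Fin 2 × Fin (n / 2)) :
    (twoStars n).Adj (.inr l) (.inl j) ↔ j = l.1 := Iff.rfl

@[simp] theorem twoStars_not_adj_inl_inl (j j' : Fin 2) :
    ¬ (twoStars n).Adj (.inl j) (.inl j') := id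

@[simp] theorem twoStars_not_adj_inr_inr (l l' : Fin 2 × Fin (n / 2)) :
    ¬ (twoStars n).Adj (.inr l) (.inr l') := id

theorem starOf_eq_of_twoStars_adj {u v : StarSeats n} (h : (twoStars n).Adj u v) :
    starOf u = starOf v := by
  rcases u with j | l <;> rcases v with j' | l' <;> simp_all

theorem utility_twoStars_of_apply_eq_inr {P : Type*} (f : P → P → ℝ) (π : P ≃ StarSeats n)
    {p : P} {j : Fin 2} {k : Fin (n / 2)} (h : π p = .inr (j, k)) :
    utility (twoStars n) f π p = f p (π.symm (.inl j)) := by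
  simp [utility, h, Fintype.sum_sum_type, eq_comm]

end TwoStars

theorem prefs18_nonneg (n : ℕ) (a : Fin n → ℕ) (p q : Fin n ⊕ Fin 2) : 0 ≤ prefs18 n a p q := by
  rcases p with i | b <;> rcases q with i' | b' <;> simp [prefs18]

section Prefs18

variable {n : ℕ} {a : Fin n → ℕ} {V : Type*} [Fintype V]

theorem utility_prefs18_inl (G : SimpleGraph V) (π : (Fin n ⊕ Fin 2) ≃ V) (i : Fin n) :
    utility G (prefs18 n a) π (.inl i) =
      ∑ b, if G.Adj (π (.inl i)) (π (.inr b)) then (a i : ℝ) else 0 := by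
  simp [utility_eq_sum_agents, Fintype.sum_sum_type, prefs18]

theorem utility_prefs18_inr (G : SimpleGraph V) (π : (Fin n ⊕ Fin 2) ≃ V) (b : Fin 2) :
    utility G (prefs18 n a) π (.inr b) =
      ∑ i, if G.Adj (π (.inr b)) (π (.inl i)) then (a i : ℝ) else 0 := by
  simp [utility_eq_sum_agents, Fintype.sum_sum_type, prefs18]

theorem utility_prefs18_swapArr_inr_inr (G : SimpleGraph V) (π : (Fin n ⊕ Fin 2) ≃ V)
    (b b' : Fin 2) :
    utility G (prefs18 n a) (swapArr π (.inr b) (.inr b')) (.inr b) =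
      utility G (prefs18 n a) π (.inr b') := by
  simp [utility_prefs18_inr, swapArr_apply, Equiv.swap_apply_of_ne_of_ne]

end Prefs18

theorem exists_equiv_prod_fin_fst_eq {α β : Type*} [Fintype α] [DecidableEq β] (s : α → β)
    {m : ℕ} (h : ∀ j, Fintype.card {i // s i = j} = m) :
    ∃ E : α ≃ β × Fin m, ∀ i, (E i).1 = s i :=
  ⟨(Equiv.sigmaFiberEquiv s).symm.trans <|
    (Equiv.sigmaCongrRight fun j => Fintype.equivFinOfCardEq (h j)).trans <|
      Equiv.sigmaEquivProd β (Fin m), fun _ => rfl⟩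

section EnvyFree

variable {n : ℕ} {a : Fin n → ℕ} {π : (Fin n ⊕ Fin 2) ≃ StarSeats n}

theorem twoStars_adj_of_envyFree_of_starOf_eq (hpos : ∀ i, 0 < a i)
    (hEF : envyFree (twoStars n) (prefs18 n a) π) {b : Fin 2} {i : Fin n}
    (h : starOf (π (.inr b)) = starOf (π (.inl i))) :
    (twoStars n).Adj (π (.inr b)) (π (.inl i)) := by
  by_contra hadj
  obtain ⟨j, k, hb, k', hi⟩ :
      ∃ j k, π (.inr b) = .inr (j, k) ∧ ∃ k', π (.inl i) = .inr (j, k') := by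
    rcases hb : π (.inr b) with j | ⟨j, k⟩ <;> rcases hi : π (.inl i) with j' | ⟨j', k'⟩ <;>
      simp_all
    exact Sum.inr_ne_inl (π.injective (hb.trans hi.symm))
  obtain ⟨q, hq⟩ : ∃ q, π q = .inl j := ⟨_, π.apply_symm_apply _⟩
  have hqb : Sum.inr b ≠ q := by rintro rfl; simp [hq] at hb
  have hqi : q ≠ .inl i := by rintro rfl; simp [hq] at hi
  -- `c_b` moves to the centre of its own star: it keeps its neighbour `q` and gains `p_i`.
  have hgain := sum_le_utility (twoStars n) (prefs18_nonneg n a) (swapArr π (.inr b) q) (.inr b)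
    (s := {q, .inl i}) (by
      simp [swapArr_apply, hq, hb, hi, Equiv.swap_apply_of_ne_of_ne, hqi.symm])
  have hstay := hEF (.inr b) q hqb
  rw [Finset.sum_pair hqi] at hgain
  rw [utility_twoStars_of_apply_eq_inr _ _ hb, π.symm_apply_eq.2 hq.symm] at hstay
  have hai : prefs18 n a (.inr b) (.inl i) = a i := rfl
  linarith [(Nat.cast_pos (α := ℝ)).2 (hpos i)]

theorem starOf_apply_inr_ne_of_envyFree (hpos : ∀ i, 0 < a i)
    (hEF : envyFree (twoStars n) (prefs18 n a) π) :
    starOf (π (.inr 0)) ≠ starOf (π (.inr 1)) := by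
  intro h
  obtain ⟨b, j, k, hb⟩ : ∃ b j k, π (.inr b) = .inr (j, k) := by
    rcases h0 : π (.inr 0) with j0 | ⟨j0, k0⟩
    · rcases h1 : π (.inr 1) with j1 | ⟨j1, k1⟩
      · simp only [h0, h1, starOf_inl] at h
        subst h
        simpa using π.injective (h0.trans h1.symm)
      · exact ⟨1, j1, k1, h1⟩
    · exact ⟨0, j0, k0, h0⟩
  have hc : ∀ b', starOf (π (.inr b')) = j := by
    have h' : ∀ b', starOf (π (.inr b')) = starOf (π (.inr 0)) := by
      intro b'; fin_cases b'
      exacts [rfl, h.symm]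
    intro b'
    rw [h' b', ← h' b, hb, starOf_inr]
  obtain ⟨j', hj'⟩ := exists_ne j
  have hp : ∀ s, starOf s = j' → ∃ i, π.symm s = .inl i := by
    intro s hs
    rcases hr : π.symm s with i | b'
    · exact ⟨i, rfl⟩
    · have := hc b'
      rw [← hr, π.apply_symm_apply, hs] at this
      exact absurd this hj'
  obtain ⟨i, hi⟩ := hp (.inr (j', k)) rfl
  obtain ⟨i', hi'⟩ := hp (.inl j') rfl
  obtain ⟨q, hq⟩ : ∃ q, π q = .inl j := ⟨_, π.apply_symm_apply _⟩
  have hπi : π (.inl i) = .inr (j', k) := (π.symm_apply_eq.1 hi).symm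
  have hqb : Sum.inr b ≠ q := by rintro rfl; simp [hq] at hb
  -- `p_i` has no neighbour of positive value, but at the centre of star `j` it would see `c_b`.
  have hstay := hEF (.inl i) q (by rintro rfl; simp [hq] at hπi)
  have hgain := sum_le_utility (twoStars n) (prefs18_nonneg n a) (swapArr π (.inl i) q) (.inl i)
    (s := {.inr b}) (by
      simp [swapArr_apply, hq, hb, Equiv.swap_apply_of_ne_of_ne, hqb])
  rw [utility_twoStars_of_apply_eq_inr _ _ hπi, hi'] at hstay
  rw [Finset.sum_singleton] at hgain
  have hai : prefs18 n a (.inl i) (.inr b) = a i := rfl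
  have hzero : prefs18 n a (.inl i) (.inl i') = 0 := rfl
  linarith [(Nat.cast_pos (α := ℝ)).2 (hpos i)]

variable (π) in
def starAgents (j : Fin 2) : Finset (Fin n) :=
  Finset.univ.filter fun i => starOf (π (.inl i)) = j

variable (π) in
theorem card_starAgents_add (j : Fin 2) :
    (starAgents π j).card + (Finset.univ.filter fun b : Fin 2 => starOf (π (.inr b)) = j).card =
      n / 2 + 1 := by
  have hseats : (Finset.univ.filter fun s : StarSeats n => starOf s = j).card = n / 2 + 1 := by
    rw [Finset.card_filter, Fintype.sum_sum_type, Fintype.sum_prod_type_right]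
    fin_cases j <;> simp [add_comm]
  rw [← hseats, ← Finset.card_equiv π (t := Finset.univ.filter fun s => starOf s = j)
    (s := Finset.univ.filter fun r => starOf (π r) = j) (by simp)]
  rw [starAgents, Finset.card_filter, Finset.card_filter, Finset.card_filter, Fintype.sum_sum_type]

theorem utility_inr_eq_sum_starAgents (hpos : ∀ i, 0 < a i)
    (hEF : envyFree (twoStars n) (prefs18 n a) π) (b : Fin 2) :
    utility (twoStars n) (prefs18 n a) π (.inr b) =
      ∑ i ∈ starAgents π (starOf (π (.inr b))), (a i : ℝ) := by
  rw [utility_prefs18_inr, starAgents, Finset.sum_filter]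
  refine Finset.sum_congr rfl fun i _ => if_congr ?_ rfl rfl
  exact ⟨fun h => (starOf_eq_of_twoStars_adj h).symm,
    fun h => twoStars_adj_of_envyFree_of_starOf_eq hpos hEF h.symm⟩

theorem exists_partition_of_envyFree (hn : Even n) (hpos : ∀ i, 0 < a i)
    (hEF : envyFree (twoStars n) (prefs18 n a) π) :
    ∃ I : Finset (Fin n), 2 * I.card = n ∧ 2 * ∑ i ∈ I, a i = ∑ i, a i := by
  have hne := starOf_apply_inr_ne_of_envyFree hpos hEF
  set I := starAgents π (starOf (π (.inr 0))) with hI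
  have hcompl : Iᶜ = starAgents π (starOf (π (.inr 1))) := by
    ext i
    simp only [I, starAgents, Finset.mem_compl, Finset.mem_filter, Finset.mem_univ, true_and]
    omega
  have hU : utility (twoStars n) (prefs18 n a) π (.inr 0) =
      utility (twoStars n) (prefs18 n a) π (.inr 1) := by
    have h01 := hEF (.inr 0) (.inr 1) (by simp)
    have h10 := hEF (.inr 1) (.inr 0) (by simp)
    rw [utility_prefs18_swapArr_inr_inr] at h01 h10
    exact le_antisymm h10 h01
  rw [utility_inr_eq_sum_starAgents hpos hEF, utility_inr_eq_sum_starAgents hpos hEF,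
    ← hcompl] at hU
  have hsum : ∑ i ∈ I, a i = ∑ i ∈ Iᶜ, a i := by exact_mod_cast hU
  have hcard := card_starAgents_add π (starOf (π (.inr 0)))
  rw [← hI] at hcard
  have hone : (Finset.univ.filter fun b : Fin 2 => starOf (π (.inr b)) = starOf (π (.inr 0))).card
      = 1 := by
    rw [Finset.card_filter, Fin.sum_univ_two, if_pos rfl, if_neg hne.symm]
  obtain ⟨c, hc⟩ := hn
  refine ⟨I, by omega, ?_⟩
  rw [← Finset.sum_add_sum_compl I a]
  omega

theorem envyFree_of_apply_inr_eq_inl (hc : ∀ b, π (.inr b) = .inl b)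
    (hU : utility (twoStars n) (prefs18 n a) π (.inr 0) =
      utility (twoStars n) (prefs18 n a) π (.inr 1)) :
    envyFree (twoStars n) (prefs18 n a) π := by
  have hleaf : ∀ i, ∃ l, π (.inl i) = .inr l := by
    intro i
    rcases h : π (.inl i) with j | l
    · exact absurd (π.injective (h.trans (hc j).symm)) (by simp)
    · exact ⟨l, rfl⟩
  rintro (i | b) (i' | b') hne
  · obtain ⟨⟨j, k⟩, hi⟩ := hleaf i
    obtain ⟨⟨j', k'⟩, hi'⟩ := hleaf i'
    simp [utility_prefs18_inl, swapArr_apply, hc, hi, hi', Equiv.swap_apply_of_ne_of_ne]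
  · obtain ⟨⟨j, k⟩, hi⟩ := hleaf i
    fin_cases b' <;> simp [utility_prefs18_inl, swapArr_apply, hc, hi, Equiv.swap_apply_of_ne_of_ne]
      <;> split_ifs <;> simp
  · obtain ⟨⟨j', k'⟩, hi'⟩ := hleaf i'
    rw [utility_prefs18_inr, utility_prefs18_inr]
    refine Finset.sum_le_sum fun x _ => ?_
    obtain rfl | hx := eq_or_ne x i'
    · simp [swapArr_apply, hc, hi']
    · obtain ⟨l, hl⟩ := hleaf x
      simp only [swapArr_apply, Equiv.swap_apply_left, ne_eq, Sum.inl_ne_inr, not_false_eq_true,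
        Sum.inl.injEq, hx, Equiv.swap_apply_of_ne_of_ne, hi', hl, twoStars_not_adj_inr_inr,
        if_false]
      split_ifs <;> positivity
  · rw [utility_prefs18_swapArr_inr_inr]
    fin_cases b <;> fin_cases b' <;> simp_all

theorem exists_envyFree_of_partition {I : Finset (Fin n)} (hcard : 2 * I.card = n)
    (hsum : 2 * ∑ i ∈ I, a i = ∑ i, a i) :
    ∃ π : (Fin n ⊕ Fin 2) ≃ StarSeats n, envyFree (twoStars n) (prefs18 n a) π := by
  let s : Fin n → Fin 2 := fun i => if i ∈ I then 0 else 1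
  obtain ⟨E, hE⟩ := exists_equiv_prod_fin_fst_eq s (m := n / 2) (by
    intro j
    rw [Fintype.card_subtype]
    fin_cases j
    · simp [s]
      omega
    · simp [s, Finset.filter_notMem_eq_sdiff, Finset.card_sdiff]
      omega)
  let π := (E.sumCongr (Equiv.refl (Fin 2))).trans (Equiv.sumComm _ _)
  refine ⟨π, envyFree_of_apply_inr_eq_inl (fun b => rfl) ?_⟩
  have hhalf : ∑ i ∈ I, a i = ∑ i ∈ Iᶜ, a i := by
    have := Finset.sum_add_sum_compl I a
    omega
  simp [utility_prefs18_inr, π, hE, s, Finset.sum_ite, Finset.filter_notMem_eq_sdiff,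
    ← Finset.compl_eq_univ_sdiff]
  exact_mod_cast hhalf

end EnvyFree

/-- for even `n` and positive integers `a_1, …, a_n` with sum `W`, the above
symmetric instance has an envy-free arrangement if and only if the index set can be split
into two halves of size `n/2` each summing to `W/2`. -/
theorem envyFree_iff_partition (n : ℕ) (hn : Even n)
    (a : Fin n → ℕ) (hpos : ∀ i, 0 < a i) :
    (∃ π : (Fin n ⊕ Fin 2) ≃ StarSeats n,
      envyFree (twoStars n) (prefs18 n a) π) ↔
    (∃ I : Finset (Fin n), 2 * I.card = n ∧ 2 * ∑ i ∈ I, a i = ∑ i, a i) :=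
  ⟨fun ⟨_, hEF⟩ => exists_partition_of_envyFree hn hpos hEF,
    fun ⟨_, hcard, hsum⟩ => exists_envyFree_of_partition hcard hsum⟩
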